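/- arXiv:1803.03924 — 4 statements merged into one kernel-verified Lean document; each statement's English description precedes it below -/
import Mathlib

section
/- For all φ, ψ ∈ F^A the commutator of the derivations ev_φ and ev_ψ satisfies [ev_φ, ev_ψ] = ev_ξ, where ξ = (ξ^a) with ξ^a = ev_φ(ψ^a) − ev_ψ(φ^a). Moreover, if the map φ ↦ ev_φ is injective and φ, ψ ∈ Ē, then ξ ∈ Ē; hence Ē carries the structure of a Lie algebra with bracket [φ,ψ] = ξ. -/
noncomputable section

variable {𝔽 : Type*} [Field 𝔽] {F : Type*} [CommRing F] [Algebra 𝔽 F] {m : ℕ}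
  {A A' : Type*}

/-- Membership in the space of divergences `Div F^M = {Σ_μ D_μ ψ^μ}`. -/
def IsDiv (D : Fin m → Derivation 𝔽 F F) (f : F) : Prop :=
  ∃ ψ : Fin m → F, f = ∑ μ, D μ (ψ μ)

/-- The evolutionary differentiation `ev_φ f = Σ_a φ^a · ∂_a f` (a finite sum). -/
def ev (pa : A → Derivation 𝔽 F F) (φ : A → F) (f : F) : F :=
  ∑ᶠ a, φ a * pa a f

/-- `(∇φ)^a_μ = D_μ φ^a + Σ_b Γ^a_{μb} · φ^b`; here `Γ b μ a` denotes `Γ^b_{μa}`. -/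
def nabla (D : Fin m → Derivation 𝔽 F F) (Γ : A → Fin m → A → F)
    (φ : A → F) (a : A) (μ : Fin m) : F :=
  D μ (φ a) + ∑ᶠ b, Γ a μ b * φ b

/-- `(∇*χ)_a = -Σ_μ D_μ χ^μ_a + Σ_{μ,b} Γ^b_{μa} · χ^μ_b`. -/
def nablaStar (D : Fin m → Derivation 𝔽 F F) (Γ : A → Fin m → A → F)
    (χ : Fin m → A → F) (a : A) : F :=
  -∑ μ, D μ (χ μ a) + ∑ᶠ b, ∑ μ, Γ b μ a * χ μ b

/-- The pairing `⟨f, φ⟩ = Σ_a f_a · φ^a`. -/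
def pair (f φ : A → F) : F := ∑ᶠ a, f a * φ a

/-- `D^i = D_1^{i^1} ∘ ⋯ ∘ D_m^{i^m}`. -/
def Dpow (D : Fin m → Derivation 𝔽 F F) (i : Fin m → ℕ) : F → F :=
  (List.finRange m).foldr (fun μ g => (⇑(D μ))^[i μ] ∘ g) id

/-- `|i| = i^1 + ⋯ + i^m`. -/
def msize {m : ℕ} (i : Fin m → ℕ) : ℕ := ∑ μ, i μ

/-- The differential operator `P(D)L = Σ_i P_i · D^i L`. -/
def applyP (D : Fin m → Derivation 𝔽 F F) (P : (Fin m → ℕ) → F) (L : F) : F :=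
  ∑ᶠ i, P i * Dpow D i L

/-- The Lagrange dual operator `P*(D)K = Σ_i (-1)^{|i|} D^i (P_i · K)`. -/
def applyPstar (D : Fin m → Derivation 𝔽 F F) (P : (Fin m → ℕ) → F) (K : F) : F :=
  ∑ᶠ i, (-1 : F) ^ msize i * Dpow D i (P i * K)

/-- The jet map `(jφ)^a = Σ_{i,α} j^a_{iα} · D^i φ^α`; here `jc a i α` denotes `j^a_{iα}`. -/
def jmap (D : Fin m → Derivation 𝔽 F F) (jc : A → (Fin m → ℕ) → A' → F)
    (φ : A' → F) (a : A) : F :=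
  ∑ᶠ i, ∑ᶠ α, jc a i α * Dpow D i (φ α)

/-- The Lagrange dual `(j*f)_α = Σ_{a,i} (-1)^{|i|} D^i (j^a_{iα} · f_a)`. -/
def jstar (D : Fin m → Derivation 𝔽 F F) (jc : A → (Fin m → ℕ) → A' → F)
    (f : A → F) (α : A') : F :=
  ∑ᶠ a, ∑ᶠ i, (-1 : F) ^ msize i * Dpow D i (jc a i α * f a)

/-- `(Λf)^α = Σ_{β,i} Λ^{αβ}_i · D^i f_β`; here `Λc α β i` denotes `Λ^{αβ}_i`. -/
def Lam (D : Fin m → Derivation 𝔽 F F) (Λc : A' → A' → (Fin m → ℕ) → F)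
    (f : A' → F) (α : A') : F :=
  ∑ᶠ β, ∑ᶠ i, Λc α β i * Dpow D i (f β)

/-- The Lagrange dual `(Λ*f)^α = Σ_{β,i} (-1)^{|i|} D^i (Λ^{βα}_i · f_β)`. -/
def LamStar (D : Fin m → Derivation 𝔽 F F) (Λc : A' → A' → (Fin m → ℕ) → F)
    (f : A' → F) (α : A') : F :=
  ∑ᶠ β, ∑ᶠ i, (-1 : F) ^ msize i * Dpow D i (Λc β α i * f β)

/-- The variational derivative `δR = j*(∂R)`, where `∂R = (∂_a R)`. -/
def vard (D : Fin m → Derivation 𝔽 F F) (pa : A → Derivation 𝔽 F F)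
    (jc : A → (Fin m → ℕ) → A' → F) (R : F) : A' → F :=
  jstar D jc (fun a => pa a R)

/-- The Hamiltonian vector `φ(R) = j(Λ(δR))`. -/
def hamv (D : Fin m → Derivation 𝔽 F F) (pa : A → Derivation 𝔽 F F)
    (jc : A → (Fin m → ℕ) → A' → F) (Λc : A' → A' → (Fin m → ℕ) → F) (R : F) : A → F :=
  jmap D jc (Lam D Λc (vard D pa jc R))

/-- The commutator `[ev_ψ, Λ]`, acting with coefficients `ev_ψ(Λ^{αβ}_i)`. -/
def evLam (D : Fin m → Derivation 𝔽 F F) (pa : A → Derivation 𝔽 F F)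
    (Λc : A' → A' → (Fin m → ℕ) → F) (ψ : A → F) (f : A' → F) (α : A') : F :=
  ∑ᶠ β, ∑ᶠ i, ev pa ψ (Λc α β i) * Dpow D i (f β)


/-!
Because every `f` has only finitely many nonzero `∂_a f`, `ev_φ` is a genuine derivation, and
its commutator with `ev_ψ` is computed termwise, the second-order terms cancelling since the
`∂_a` commute. For the second part, `[D_μ, ev_φ] = ev_{∇_μ φ}` vanishes for `φ ∈ Ē`, and the
Jacobi identity for `D_μ, ∂_x, ∂_y` together with injectivity of `φ ↦ ev_φ` gives the symmetry
`∂_y Γ^e_{μx} = ∂_x Γ^e_{μy}`. Expanding `∇ξ` leaves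
`Σ_b (φ^b ev_ψ - ψ^b ev_φ) Γ^a_{μb}`, which vanishes by that symmetry.
-/

open Finset

section EvolutionaryDerivation

variable (pa : A → Derivation 𝔽 F F)

theorem ev_eq_sum (φ : A → F) {f : F} {s : Finset A} (hs : ∀ a, pa a f ≠ 0 → a ∈ s) :
    ev pa φ f = ∑ a ∈ s, φ a * pa a f :=
  finsum_eq_sum_of_support_subset _ fun a ha => hs a (right_ne_zero_of_mul ha)

theorem ev_pa_eq_sum (hpacomm : ∀ a b (f : F), pa a (pa b f) = pa b (pa a f)) (φ : A → F)
    (b : A) {f : F} {s : Finset A} (hs : ∀ a, pa a f ≠ 0 → a ∈ s) :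
    ev pa φ (pa b f) = ∑ a ∈ s, φ a * pa a (pa b f) :=
  ev_eq_sum pa φ fun a h => hs a fun h0 => h (by rw [hpacomm, h0, map_zero])

theorem sum_mul_ev_comm_of_closed {θ : A → F} {s : Finset A} (hs : ∀ b ∉ s, θ b = 0)
    (hθ : ∀ b c, pa c (θ b) = pa b (θ c)) (φ ψ : A → F) :
    ∑ b ∈ s, φ b * ev pa ψ (θ b) = ∑ b ∈ s, ψ b * ev pa φ (θ b) := by
  have hsupp : ∀ b c, pa c (θ b) ≠ 0 → c ∈ s := fun b c h => by
    by_contra hc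
    rw [hθ, hs c hc, map_zero] at h
    exact h rfl
  simp only [ev_eq_sum pa _ (hsupp _), mul_sum]
  rw [sum_comm]
  exact sum_congr rfl fun b _ => sum_congr rfl fun c _ => by rw [hθ]; ring

variable (hpafin : ∀ f : F, {a : A | pa a f ≠ 0}.Finite)
include hpafin

theorem ev_summand_hasFiniteSupport (φ : A → F) (f : F) :
    Function.HasFiniteSupport fun a => φ a * pa a f :=
  Function.HasFiniteSupport.fun_mul_right φ (hpafin f)

theorem ev_add (φ : A → F) (x y : F) : ev pa φ (x + y) = ev pa φ x + ev pa φ y := by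
  simp only [ev, map_add, mul_add]
  exact finsum_add_distrib (ev_summand_hasFiniteSupport pa hpafin φ x)
    (ev_summand_hasFiniteSupport pa hpafin φ y)

theorem ev_smul (φ : A → F) (c : 𝔽) (x : F) : ev pa φ (c • x) = c • ev pa φ x := by
  simp only [ev, Derivation.map_smul, mul_smul_comm]
  exact (smul_finsum' c (ev_summand_hasFiniteSupport pa hpafin φ x)).symm

theorem ev_leibniz (φ : A → F) (x y : F) :
    ev pa φ (x * y) = x • ev pa φ y + y • ev pa φ x := by
  have hfin := ev_summand_hasFiniteSupport pa hpafin φ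
  simp only [ev, Derivation.leibniz, smul_eq_mul, mul_add, mul_left_comm (φ _)]
  rw [finsum_add_distrib ((hfin y).fun_mul_right _) ((hfin x).fun_mul_right _),
    mul_finsum' _ _ (hfin y), mul_finsum' _ _ (hfin x)]

theorem ev_sub_left (φ ψ : A → F) (f : F) : ev pa (φ - ψ) f = ev pa φ f - ev pa ψ f := by
  simp only [ev, Pi.sub_apply, sub_mul]
  exact finsum_sub_distrib (ev_summand_hasFiniteSupport pa hpafin φ f)
    (ev_summand_hasFiniteSupport pa hpafin ψ f)

def evDerivation (φ : A → F) : Derivation 𝔽 F F :=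
  Derivation.mk' ⟨⟨ev pa φ, ev_add pa hpafin φ⟩, ev_smul pa hpafin φ⟩ (ev_leibniz pa hpafin φ)

@[simp]
theorem evDerivation_apply (φ : A → F) (f : F) : evDerivation pa hpafin φ f = ev pa φ f := rfl

theorem evDerivation_injective (hinj : ∀ ψ : A → F, (∀ f, ev pa ψ f = 0) → ψ = 0) :
    Function.Injective (evDerivation pa hpafin) := fun φ ψ h =>
  sub_eq_zero.1 <| hinj _ fun f => by
    rw [ev_sub_left pa hpafin, ← evDerivation_apply pa hpafin, h, evDerivation_apply, sub_self]

variable (hpacomm : ∀ a b (f : F), pa a (pa b f) = pa b (pa a f))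
include hpacomm

theorem lie_pa_evDerivation (b : A) (θ : A → F) :
    ⁅pa b, evDerivation pa hpafin θ⁆ = evDerivation pa hpafin (fun a => pa b (θ a)) := by
  ext f
  obtain ⟨T, hT⟩ : ∃ T : Finset A, ∀ a, pa a f ≠ 0 → a ∈ T :=
    ⟨(hpafin f).toFinset, fun a => (hpafin f).mem_toFinset.2⟩
  simp only [Derivation.commutator_apply, evDerivation_apply]
  rw [ev_eq_sum pa θ hT, ev_eq_sum pa _ hT, ev_pa_eq_sum pa hpacomm _ _ hT, map_sum,
    ← sum_sub_distrib]
  refine sum_congr rfl fun a _ => ?_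
  rw [Derivation.leibniz, smul_eq_mul, smul_eq_mul, hpacomm]
  ring

theorem lie_evDerivation (φ ψ : A → F) :
    ⁅evDerivation pa hpafin φ, evDerivation pa hpafin ψ⁆
      = evDerivation pa hpafin (fun a => ev pa φ (ψ a) - ev pa ψ (φ a)) := by
  ext f
  obtain ⟨T, hT⟩ : ∃ T : Finset A, ∀ a, pa a f ≠ 0 → a ∈ T :=
    ⟨(hpafin f).toFinset, fun a => (hpafin f).mem_toFinset.2⟩
  have expand (χ η : A → F) : ev pa χ (ev pa η f)
      = ∑ b ∈ T, (pa b f * ev pa χ (η b) + ∑ a ∈ T, χ a * η b * pa a (pa b f)) := by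
    rw [ev_eq_sum pa η hT, ← evDerivation_apply pa hpafin χ, map_sum]
    refine sum_congr rfl fun b _ => ?_
    rw [Derivation.leibniz, evDerivation_apply, ev_pa_eq_sum pa hpacomm _ _ hT, smul_eq_mul,
      smul_eq_mul, mul_sum, add_comm]
    simp only [evDerivation_apply, mul_left_comm (η b), mul_assoc]
  have swap : ∑ b ∈ T, ∑ a ∈ T, φ a * ψ b * pa a (pa b f)
      = ∑ b ∈ T, ∑ a ∈ T, ψ a * φ b * pa a (pa b f) := by
    rw [sum_comm]
    exact sum_congr rfl fun _ _ => sum_congr rfl fun _ _ => by rw [hpacomm]; ring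
  simp only [Derivation.commutator_apply, evDerivation_apply]
  rw [expand, expand, ev_eq_sum pa _ hT, sum_add_distrib, sum_add_distrib, swap,
    add_sub_add_right_eq_sub, ← sum_sub_distrib]
  exact sum_congr rfl fun _ _ => by ring

end EvolutionaryDerivation

section Connection

variable (pa : A → Derivation 𝔽 F F) (hpafin : ∀ f : F, {a : A | pa a f ≠ 0}.Finite)
include hpafin

theorem lie_evDerivation_of_lie_pa (d : Derivation 𝔽 F F) (γ : A → A → F)
    (hγfin : ∀ b, {c | γ b c ≠ 0}.Finite)
    (hγ : ∀ a, ⁅d, pa a⁆ = evDerivation pa hpafin (fun b => γ b a)) (φ : A → F) :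
    ⁅d, evDerivation pa hpafin φ⁆
      = evDerivation pa hpafin (fun b => d (φ b) + ∑ᶠ c, γ b c * φ c) := by
  classical
  ext g
  set T := (hpafin g).toFinset
  -- all sums below run over `U`; it contains the supports of `∂g`, `∂(dg)` and of `γ^b_·`, `b ∈ T`
  set U := T ∪ (hpafin (d g)).toFinset ∪ T.biUnion fun b => (hγfin b).toFinset
  have hTU : ∀ a, pa a g ≠ 0 → a ∈ U := fun a h =>
    mem_union_left _ (mem_union_left _ ((hpafin g).mem_toFinset.2 h))
  have hdU : ∀ a, pa a (d g) ≠ 0 → a ∈ U := fun a h =>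
    mem_union_left _ (mem_union_right _ ((hpafin (d g)).mem_toFinset.2 h))
  have hd_pa (c : A) : d (pa c g) = pa c (d g) + ∑ b ∈ U, γ b c * pa b g := by
    rw [← ev_eq_sum pa _ hTU, ← evDerivation_apply pa hpafin, ← hγ, Derivation.commutator_apply]
    ring
  have hfinsum (b : A) : (∑ᶠ c, γ b c * φ c) * pa b g = (∑ c ∈ U, γ b c * φ c) * pa b g := by
    by_cases hb : pa b g = 0
    · rw [hb, mul_zero, mul_zero]
    rw [finsum_eq_sum_of_support_subset]
    intro c hc
    exact mem_union_right _ (mem_biUnion.2 ⟨b, (hpafin g).mem_toFinset.2 hb,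
      (hγfin b).mem_toFinset.2 (left_ne_zero_of_mul hc)⟩)
  simp only [Derivation.commutator_apply, evDerivation_apply]
  rw [ev_eq_sum pa _ hTU, ev_eq_sum pa _ hdU, ev_eq_sum pa _ hTU, map_sum, ← sum_sub_distrib]
  simp only [Derivation.leibniz, smul_eq_mul, hd_pa, add_mul, hfinsum, sum_add_distrib, sum_mul]
  rw [sum_comm (s := U) (t := U) (f := fun b c => γ b c * φ c * pa b g), ← sum_add_distrib]
  refine sum_congr rfl fun c _ => ?_
  have hswap : φ c * ∑ b ∈ U, γ b c * pa b g = ∑ b ∈ U, γ b c * φ c * pa b g := by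
    rw [mul_sum]
    exact sum_congr rfl fun b _ => by ring
  rw [mul_add, hswap]
  ring

variable (hpacomm : ∀ a b (f : F), pa a (pa b f) = pa b (pa a f))
  (hinj : ∀ ψ : A → F, (∀ f, ev pa ψ f = 0) → ψ = 0)
include hpacomm hinj

theorem pa_gamma_symm (d : Derivation 𝔽 F F) (γ : A → A → F)
    (hγ : ∀ a, ⁅d, pa a⁆ = evDerivation pa hpafin (fun b => γ b a)) (x y e : A) :
    pa y (γ e x) = pa x (γ e y) := by
  have hcomm : ⁅pa x, pa y⁆ = 0 := by
    ext f
    rw [Derivation.commutator_apply, hpacomm, sub_self]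
    rfl
  have jacobi := leibniz_lie d (pa x) (pa y)
  rw [hcomm, lie_zero, hγ, hγ, ← lie_skew, lie_pa_evDerivation pa hpafin hpacomm,
    lie_pa_evDerivation pa hpafin hpacomm, eq_comm, neg_add_eq_zero] at jacobi
  exact congrFun (evDerivation_injective pa hpafin hinj jacobi) e

end Connection

theorem nabla_ev_bracket_eq_zero (D : Fin m → Derivation 𝔽 F F) (pa : A → Derivation 𝔽 F F)
    (hpacomm : ∀ a b (f : F), pa a (pa b f) = pa b (pa a f))
    (hpafin : ∀ f : F, {a : A | pa a f ≠ 0}.Finite) (Γ : A → Fin m → A → F)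
    (hΓfin : ∀ b : A, {p : Fin m × A | Γ b p.1 p.2 ≠ 0}.Finite)
    (hΓ : ∀ (μ : Fin m) (a : A) (f : F),
      D μ (pa a f) - pa a (D μ f) = ∑ᶠ b, Γ b μ a * pa b f)
    (hinj : ∀ ψ : A → F, (∀ f, ev pa ψ f = 0) → ψ = 0) {φ ψ : A → F}
    (hφ : ∀ a μ, nabla D Γ φ a μ = 0) (hψ : ∀ a μ, nabla D Γ ψ a μ = 0) (a : A) (μ : Fin m) :
    nabla D Γ (fun b => ev pa φ (ψ b) - ev pa ψ (φ b)) a μ = 0 := by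
  have hlie (b : A) : ⁅D μ, pa b⁆ = evDerivation pa hpafin (fun c => Γ c μ b) :=
    Derivation.ext (hΓ μ b)
  have hγfin (b : A) : {c | Γ b μ c ≠ 0}.Finite :=
    (hΓfin b).preimage (Prod.mk_right_injective μ).injOn
  have hcommute {χ : A → F} (hχ : ∀ b, nabla D Γ χ b μ = 0) (g : F) :
      D μ (ev pa χ g) = ev pa χ (D μ g) := by
    have h := congrArg (· g) (lie_evDerivation_of_lie_pa pa hpafin (D μ) _ hγfin hlie χ)
    simp only [Derivation.commutator_apply, evDerivation_apply] at h
    rw [← sub_eq_zero, h]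
    exact finsum_eq_zero_of_forall_eq_zero fun b => mul_eq_zero_of_left (hχ b) _
  set G := (hγfin a).toFinset
  have hG : ∀ b ∉ G, Γ a μ b = 0 := fun b hb => by
    by_contra h
    exact hb ((hγfin a).mem_toFinset.2 h)
  have hsum (χ : A → F) : ∑ᶠ b, Γ a μ b * χ b = ∑ b ∈ G, Γ a μ b * χ b :=
    finsum_eq_sum_of_support_subset _ fun b hb => (hγfin a).mem_toFinset.2 (left_ne_zero_of_mul hb)
  have hD {χ : A → F} (hχ : ∀ b μ, nabla D Γ χ b μ = 0) :
      D μ (χ a) = -∑ b ∈ G, Γ a μ b * χ b := by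
    rw [← hsum]
    exact eq_neg_of_add_eq_zero_left (hχ a μ)
  have hclosed := sum_mul_ev_comm_of_closed pa hG
    (fun b c => pa_gamma_symm pa hpafin hpacomm hinj (D μ) (fun b c => Γ b μ c) hlie b c a) φ ψ
  show D μ (ev pa φ (ψ a) - ev pa ψ (φ a)) + ∑ᶠ b, Γ a μ b * (ev pa φ (ψ b) - ev pa ψ (φ b)) = 0
  rw [map_sub, hcommute (fun b => hφ b μ), hcommute (fun b => hψ b μ), hD hψ, hD hφ, hsum]
  simp only [← evDerivation_apply pa hpafin, map_neg, map_sum, Derivation.leibniz, smul_eq_mul]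
  simp only [evDerivation_apply, sum_add_distrib, mul_sub, sum_sub_distrib, hclosed]
  ring

theorem stmt_1_general
    {𝔽 : Type*} [Field 𝔽] {F : Type*} [CommRing F] [Algebra 𝔽 F]
    {m : ℕ} {A : Type*}
    (D : Fin m → Derivation 𝔽 F F)
    (pa : A → Derivation 𝔽 F F)
    (hpacomm : ∀ a b (f : F), pa a (pa b f) = pa b (pa a f))
    (hpafin : ∀ f : F, {a : A | pa a f ≠ 0}.Finite)
    (Γ : A → Fin m → A → F)
    (hΓfin : ∀ b : A, {p : Fin m × A | Γ b p.1 p.2 ≠ 0}.Finite)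
    (hΓ : ∀ (μ : Fin m) (a : A) (f : F),
      D μ (pa a f) - pa a (D μ f) = ∑ᶠ b, Γ b μ a * pa b f)
    (hinj : ∀ ψ : A → F, (∀ f, ev pa ψ f = 0) → ψ = 0) :
    (∀ (φ ψ : A → F) (f : F),
        ev pa φ (ev pa ψ f) - ev pa ψ (ev pa φ f)
          = ev pa (fun a => ev pa φ (ψ a) - ev pa ψ (φ a)) f)
    ∧ (∀ φ ψ : A → F, (∀ (a : A) (μ : Fin m), nabla D Γ φ a μ = 0) →
        (∀ (a : A) (μ : Fin m), nabla D Γ ψ a μ = 0) →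
        ∀ (a : A) (μ : Fin m),
          nabla D Γ (fun b => ev pa φ (ψ b) - ev pa ψ (φ b)) a μ = 0) :=
  ⟨fun φ ψ => DFunLike.congr_fun (lie_evDerivation pa hpafin hpacomm φ ψ),
    fun _ _ => nabla_ev_bracket_eq_zero D pa hpacomm hpafin Γ hΓfin hΓ hinj⟩

/-- `[ev_φ, ev_ψ] = ev_ξ` with `ξ^a = ev_φ ψ^a - ev_ψ φ^a`;
moreover, if `ψ ↦ ev_ψ` is injective and `φ, ψ ∈ Ē = ker ∇`, then `ξ ∈ Ē`
(so `Ē` is a Lie algebra under `[φ,ψ] = ξ`). -/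
theorem stmt_1
    {𝔽 : Type*} [Field 𝔽] [CharZero 𝔽] {F : Type*} [CommRing F] [Algebra 𝔽 F]
    {m : ℕ} {A : Type*}
    (D : Fin m → Derivation 𝔽 F F)
    (hDcomm : ∀ μ ν (f : F), D μ (D ν f) = D ν (D μ f))
    (pa : A → Derivation 𝔽 F F)
    (hpacomm : ∀ a b (f : F), pa a (pa b f) = pa b (pa a f))
    (hpafin : ∀ f : F, {a : A | pa a f ≠ 0}.Finite)
    (Γ : A → Fin m → A → F)
    (hΓfin : ∀ b : A, {p : Fin m × A | Γ b p.1 p.2 ≠ 0}.Finite)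
    (hΓ : ∀ (μ : Fin m) (a : A) (f : F),
      D μ (pa a f) - pa a (D μ f) = ∑ᶠ b, Γ b μ a * pa b f)
    (hinj : ∀ ψ : A → F, (∀ f, ev pa ψ f = 0) → ψ = 0) :
    (∀ (φ ψ : A → F) (f : F),
        ev pa φ (ev pa ψ f) - ev pa ψ (ev pa φ f)
          = ev pa (fun a => ev pa φ (ψ a) - ev pa ψ (φ a)) f)
    ∧ (∀ φ ψ : A → F, (∀ (a : A) (μ : Fin m), nabla D Γ φ a μ = 0) →
        (∀ (a : A) (μ : Fin m), nabla D Γ ψ a μ = 0) →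
        ∀ (a : A) (μ : Fin m),
          nabla D Γ (fun b => ev pa φ (ψ b) - ev pa ψ (φ b)) a μ = 0) :=
  stmt_1_general D pa hpacomm hpafin Γ hΓfin hΓ hinj
end
end

section
/- (Commutator with a skew-adjoint operator is skew-adjoint.) Let P, Q : I → F be finitely supported families satisfying, for all g ∈ F, Σ_i (−1)^{|i|} D^i(Q_i·g) = −Σ_i P_i·D^i g (i.e. Q(D)* = −P(D) as operators on F). Let V be a derivation of F with V ∘ D_μ = D_μ ∘ V for all μ ∈ M. Then for all g ∈ F: Σ_i (−1)^{|i|} D^i((V Q_i)·g) = −Σ_i (V P_i)·D^i g. -/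
noncomputable section

variable {𝔽 : Type*} [Field 𝔽] {F : Type*} [CommRing F] [Algebra 𝔽 F] {m : ℕ}
  {A A' : Type*}

section Aux

variable {𝔽 : Type*} [Field 𝔽] {F : Type*} [CommRing F] [Algebra 𝔽 F] {m : ℕ}

lemma iter_add' (d : Derivation 𝔽 F F) (n : ℕ) (x y : F) :
    (⇑d)^[n] (x + y) = (⇑d)^[n] x + (⇑d)^[n] y := by
  induction n generalizing x y with
  | zero => simp
  | succ n ih => simp [Function.iterate_succ_apply, map_add, ih]

lemma Dpow_add' (D : Fin m → Derivation 𝔽 F F) (i : Fin m → ℕ) (x y : F) :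
    Dpow D i (x + y) = Dpow D i x + Dpow D i y := by
  unfold Dpow
  induction List.finRange m with
  | nil => simp
  | cons μ l ih => simp [Function.comp_apply, ih, iter_add']

lemma Dpow_zero' (D : Fin m → Derivation 𝔽 F F) (i : Fin m → ℕ) :
    Dpow D i (0 : F) = 0 := by
  have h := Dpow_add' D i (0 : F) 0
  simpa using h.symm

lemma iter_comm' (d : Derivation 𝔽 F F) (V : Derivation 𝔽 F F)
    (hv : ∀ x, V (d x) = d (V x)) (n : ℕ) (x : F) :
    V ((⇑d)^[n] x) = (⇑d)^[n] (V x) := by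
  induction n generalizing x with
  | zero => simp
  | succ n ih => simp [Function.iterate_succ_apply, ih, hv]

lemma Dpow_comm' (D : Fin m → Derivation 𝔽 F F) (i : Fin m → ℕ)
    (V : Derivation 𝔽 F F) (hV : ∀ (μ : Fin m) (f : F), V (D μ f) = D μ (V f))
    (f : F) : V (Dpow D i f) = Dpow D i (V f) := by
  unfold Dpow
  induction List.finRange m generalizing f with
  | nil => simp
  | cons μ l ih =>
    simp only [List.foldr_cons, Function.comp_apply]
    rw [iter_comm' (D μ) V (hV μ), ih]

lemma V_neg_one_pow (V : Derivation 𝔽 F F) (k : ℕ) : V ((-1 : F) ^ k) = 0 := by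
  induction k with
  | zero => simp
  | succ k ih => rw [pow_succ, Derivation.leibniz]; simp [ih]

lemma V_applyPstar (D : Fin m → Derivation 𝔽 F F) (V : Derivation 𝔽 F F)
    (hV : ∀ (μ : Fin m) (f : F), V (D μ f) = D μ (V f))
    (Q : (Fin m → ℕ) → F) (hQ : {i : Fin m → ℕ | Q i ≠ 0}.Finite) (g : F) :
    V (applyPstar D Q g) =
      applyPstar D (fun i => V (Q i)) g + applyPstar D Q (V g) := by
  unfold applyPstar
  have hsupp : ∀ (R : (Fin m → ℕ) → F) (x : F),
      (Function.support fun i => (-1 : F) ^ msize i * Dpow D i (R i * x)) ⊆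
        {i : Fin m → ℕ | R i ≠ 0} := by
    intro R x i hi
    by_contra h
    simp only [Set.mem_setOf_eq, not_not] at h
    apply hi
    simp [h, Dpow_zero' D i]
  have hmap : V (∑ᶠ i, (-1 : F) ^ msize i * Dpow D i (Q i * g)) =
      ∑ᶠ i, V ((-1 : F) ^ msize i * Dpow D i (Q i * g)) :=
    V.toLinearMap.toAddMonoidHom.map_finsum (hQ.subset (hsupp Q g))
  rw [hmap]
  rw [← finsum_add_distrib (hQ.subset (by
      intro i hi
      by_contra h
      simp only [Set.mem_setOf_eq, not_not] at h
      exact hi (by simp [h, Dpow_zero' D i])))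
    (hQ.subset (hsupp Q (V g)))]
  apply finsum_congr
  intro i
  rw [Derivation.leibniz, V_neg_one_pow, Dpow_comm' D i V hV, Derivation.leibniz]
  have : (Q i • V g + g • V (Q i) : F) = V (Q i) * g + Q i * V g := by
    simp [smul_eq_mul]; ring
  rw [this, Dpow_add']
  simp [smul_eq_mul]; ring

lemma V_applyP (D : Fin m → Derivation 𝔽 F F) (V : Derivation 𝔽 F F)
    (hV : ∀ (μ : Fin m) (f : F), V (D μ f) = D μ (V f))
    (P : (Fin m → ℕ) → F) (hP : {i : Fin m → ℕ | P i ≠ 0}.Finite) (g : F) :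
    V (applyP D P g) =
      applyP D (fun i => V (P i)) g + applyP D P (V g) := by
  unfold applyP
  have hsupp : ∀ (R : (Fin m → ℕ) → F) (x : F),
      (Function.support fun i => R i * Dpow D i x) ⊆
        {i : Fin m → ℕ | R i ≠ 0} := by
    intro R x i hi
    by_contra h
    simp only [Set.mem_setOf_eq, not_not] at h
    exact hi (by simp [h])
  have hmap : V (∑ᶠ i, P i * Dpow D i g) = ∑ᶠ i, V (P i * Dpow D i g) :=
    V.toLinearMap.toAddMonoidHom.map_finsum (hP.subset (hsupp P g))
  rw [hmap]
  rw [← finsum_add_distrib (hP.subset (by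
      intro i hi
      by_contra h
      simp only [Set.mem_setOf_eq, not_not] at h
      exact hi (by simp [h])))
    (hP.subset (hsupp P (V g)))]
  apply finsum_congr
  intro i
  rw [Derivation.leibniz, Dpow_comm' D i V hV]
  simp [smul_eq_mul]; ring

end Aux

/-- commutator with a skew-adjoint operator is skew-adjoint:
if `Q(D)* = -P(D)` as operators on `F` and `V` is a derivation commuting with all
`D_μ`, then `Σ_i (-1)^{|i|} D^i ((V Q_i) · g) = -Σ_i (V P_i) · D^i g` for all `g`. -/
theorem stmt_6
    {𝔽 : Type*} [Field 𝔽] [CharZero 𝔽] {F : Type*} [CommRing F] [Algebra 𝔽 F]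
    {m : ℕ}
    (D : Fin m → Derivation 𝔽 F F)
    (hDcomm : ∀ μ ν (f : F), D μ (D ν f) = D ν (D μ f))
    (P Q : (Fin m → ℕ) → F)
    (hPfin : {i : Fin m → ℕ | P i ≠ 0}.Finite)
    (hQfin : {i : Fin m → ℕ | Q i ≠ 0}.Finite)
    (hdual : ∀ g : F, applyPstar D Q g = -applyP D P g)
    (V : Derivation 𝔽 F F)
    (hV : ∀ (μ : Fin m) (f : F), V (D μ f) = D μ (V f)) :
    ∀ g : F, applyPstar D (fun i => V (Q i)) g = -applyP D (fun i => V (P i)) g := by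
  intro g
  have h1 := V_applyPstar D V hV Q hQfin g
  have h2 := V_applyP D V hV P hPfin g
  rw [hdual g, map_neg, hdual (V g)] at h1
  linear_combination -h1 - h2
end
end

section
/- (Well-definedness of the Lie–Poisson bracket.) Let Λ̄ : F̄_A → F^A be an 𝔽-linear map with ∇ ∘ Λ̄ = 0 and Λ̄ ∘ ∇* = 0. Then for all finitely supported f, g ∈ F̄_A and all finitely supported χ, χ′ ∈ F̄^M_A: ⟨f + ∇*χ, Λ̄(g + ∇*χ′)⟩ − ⟨f, Λ̄g⟩ ∈ Div F^M. -/
noncomputable section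

variable {𝔽 : Type*} [Field 𝔽] {F : Type*} [CommRing F] [Algebra 𝔽 F] {m : ℕ}
  {A A' : Type*}

/-- Outside an explicit finite set, `∇*χ` vanishes. -/
lemma nablaStar_eq_zero_outside
    {𝔽 : Type*} [Field 𝔽] {F : Type*} [CommRing F] [Algebra 𝔽 F]
    {m : ℕ} {A : Type*} [DecidableEq A]
    (D : Fin m → Derivation 𝔽 F F) (Γ : A → Fin m → A → F)
    (hΓfin : ∀ b : A, {p : Fin m × A | Γ b p.1 p.2 ≠ 0}.Finite)
    (χ : Fin m → A → F) (hχ : {p : Fin m × A | χ p.1 p.2 ≠ 0}.Finite)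
    (a : A)
    (ha : a ∉ (hχ.toFinset.image Prod.snd) ∪
      (hχ.toFinset.image Prod.snd).biUnion
        (fun b => (hΓfin b).toFinset.image Prod.snd)) :
    nablaStar D Γ χ a = 0 := by
  classical
  simp only [Finset.mem_union, Finset.mem_biUnion, not_or, not_exists] at ha
  obtain ⟨ha1, ha2⟩ := ha
  have hχ0 : ∀ μ, χ μ a = 0 := by
    intro μ
    by_contra hne
    exact ha1 (Finset.mem_image.2 ⟨(μ, a), (Set.Finite.mem_toFinset _).2 hne, rfl⟩)
  unfold nablaStar
  have h1 : ∀ μ, D μ (χ μ a) = 0 := fun μ => by rw [hχ0 μ, map_zero]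
  have h2 : ∑ᶠ b, ∑ μ, Γ b μ a * χ μ b = 0 := by
    apply finsum_eq_zero_of_forall_eq_zero
    intro b
    apply Finset.sum_eq_zero
    intro μ _
    by_cases hb : b ∈ hχ.toFinset.image Prod.snd
    · have hΓab : Γ b μ a = 0 := by
        by_contra hne
        exact ha2 b ⟨hb, Finset.mem_image.2
          ⟨(μ, a), (Set.Finite.mem_toFinset _).2 hne, rfl⟩⟩
      rw [hΓab, zero_mul]
    · have : χ μ b = 0 := by
        by_contra hne
        exact hb (Finset.mem_image.2 ⟨(μ, b), (Set.Finite.mem_toFinset _).2 hne, rfl⟩)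
      rw [this, mul_zero]
  simp [h1, h2]

/-- `∇*χ` has finite support. -/
lemma nablaStar_support_finite
    {𝔽 : Type*} [Field 𝔽] {F : Type*} [CommRing F] [Algebra 𝔽 F]
    {m : ℕ} {A : Type*}
    (D : Fin m → Derivation 𝔽 F F) (Γ : A → Fin m → A → F)
    (hΓfin : ∀ b : A, {p : Fin m × A | Γ b p.1 p.2 ≠ 0}.Finite)
    (χ : Fin m → A → F) (hχ : {p : Fin m × A | χ p.1 p.2 ≠ 0}.Finite) :
    {a : A | nablaStar D Γ χ a ≠ 0}.Finite := by
  classical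
  apply Set.Finite.subset (Finset.finite_toSet
    ((hχ.toFinset.image Prod.snd) ∪
      (hχ.toFinset.image Prod.snd).biUnion
        (fun b => (hΓfin b).toFinset.image Prod.snd)))
  intro a ha
  by_contra hmem
  exact ha (nablaStar_eq_zero_outside D Γ hΓfin χ hχ a (by simpa using hmem))

/-- well-definedness of the Lie-Poisson bracket:
for an `𝔽`-linear `Λ̄` with `∇ ∘ Λ̄ = 0` and `Λ̄ ∘ ∇* = 0`,
`⟨f + ∇*χ, Λ̄(g + ∇*χ')⟩ - ⟨f, Λ̄g⟩ ∈ Div F^M`. -/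
theorem stmt_8
    {𝔽 : Type*} [Field 𝔽] [CharZero 𝔽] {F : Type*} [CommRing F] [Algebra 𝔽 F]
    {m : ℕ} {A : Type*}
    (D : Fin m → Derivation 𝔽 F F)
    (hDcomm : ∀ μ ν (f : F), D μ (D ν f) = D ν (D μ f))
    (Γ : A → Fin m → A → F)
    (hΓfin : ∀ b : A, {p : Fin m × A | Γ b p.1 p.2 ≠ 0}.Finite)
    (Λbar : (A → F) → (A → F))
    (hadd : ∀ f g : A → F, {a : A | f a ≠ 0}.Finite → {a : A | g a ≠ 0}.Finite →
      Λbar (f + g) = Λbar f + Λbar g)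
    (hsmul : ∀ (c : 𝔽) (f : A → F), {a : A | f a ≠ 0}.Finite →
      Λbar (c • f) = c • Λbar f)
    (hnab : ∀ f : A → F, {a : A | f a ≠ 0}.Finite →
      ∀ (a : A) (μ : Fin m), nabla D Γ (Λbar f) a μ = 0)
    (hker : ∀ χ : Fin m → A → F, {p : Fin m × A | χ p.1 p.2 ≠ 0}.Finite →
      Λbar (nablaStar D Γ χ) = 0)
    (f g : A → F)
    (hf : {a : A | f a ≠ 0}.Finite) (hg : {a : A | g a ≠ 0}.Finite)
    (χ χ' : Fin m → A → F)
    (hχ : {p : Fin m × A | χ p.1 p.2 ≠ 0}.Finite)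
    (hχ' : {p : Fin m × A | χ' p.1 p.2 ≠ 0}.Finite) :
    IsDiv D (pair (f + nablaStar D Γ χ) (Λbar (g + nablaStar D Γ χ'))
      - pair f (Λbar g)) := by
  classical
  set φ : A → F := Λbar g with hφdef
  set h : A → F := nablaStar D Γ χ with hhdef
  -- finite index sets
  set Sχ : Finset A := hχ.toFinset.image Prod.snd with hSχ
  set SΓ : A → Finset A := fun b => (hΓfin b).toFinset.image Prod.snd with hSΓ
  set T : Finset A := hf.toFinset ∪ (Sχ ∪ Sχ.biUnion SΓ) with hT
  -- vanishing facts
  have hχ0 : ∀ (μ : Fin m) (a : A), a ∉ Sχ → χ μ a = 0 := by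
    intro μ a ha
    by_contra hne
    exact ha (Finset.mem_image.2 ⟨(μ, a), (Set.Finite.mem_toFinset _).2 hne, rfl⟩)
  have hΓ0 : ∀ (b : A) (μ : Fin m) (a : A), a ∉ SΓ b → Γ b μ a = 0 := by
    intro b μ a ha
    by_contra hne
    exact ha (Finset.mem_image.2 ⟨(μ, a), (Set.Finite.mem_toFinset _).2 hne, rfl⟩)
  have hχT : Sχ ⊆ T := by
    intro a ha; rw [hT]; exact Finset.mem_union_right _ (Finset.mem_union_left _ ha)
  have hΓT : ∀ b ∈ Sχ, SΓ b ⊆ T := by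
    intro b hb a ha
    rw [hT]
    exact Finset.mem_union_right _ (Finset.mem_union_right _
      (Finset.mem_biUnion.2 ⟨b, hb, ha⟩))
  have hh0 : ∀ a : A, a ∉ T → h a = 0 := by
    intro a ha
    apply nablaStar_eq_zero_outside D Γ hΓfin χ hχ
    intro hmem
    exact ha (Finset.mem_union_right _ hmem)
  -- Λbar collapses
  have hkey : Λbar (g + nablaStar D Γ χ') = φ := by
    rw [hadd g _ hg (nablaStar_support_finite D Γ hΓfin χ' hχ'), hker χ' hχ', add_zero]
  rw [hkey]
  -- split the pairing
  have hsplit : pair (f + h) φ = pair f φ + pair h φ := by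
    unfold pair
    have : ∀ a : A, (f + h) a * φ a = f a * φ a + h a * φ a := by
      intro a; simp [add_mul]
    rw [finsum_congr this]
    apply finsum_add_distrib
    · apply hf.subset
      intro a ha
      simp only [Function.mem_support] at ha
      intro hfa
      exact ha (by rw [hfa, zero_mul])
    · apply Set.Finite.subset T.finite_toSet
      intro a ha
      simp only [Function.mem_support] at ha
      by_contra hmem
      exact ha (by rw [hh0 a hmem, zero_mul])
  rw [hsplit, add_sub_cancel_left]
  -- the divergence witness
  refine ⟨fun μ => -∑ a ∈ T, χ μ a * φ a, ?_⟩
  -- express pair h φ as a Finset sum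
  have hpair : pair h φ = ∑ a ∈ T, h a * φ a := by
    apply finsum_eq_finset_sum_of_support_subset
    intro a ha
    simp only [Function.mem_support] at ha
    by_contra hmem
    exact ha (by rw [hh0 a hmem, zero_mul])
  rw [hpair]
  -- expand h
  have hexp : ∀ a : A, h a = -∑ μ, D μ (χ μ a) + ∑ b ∈ Sχ, ∑ μ, Γ b μ a * χ μ b := by
    intro a
    rw [hhdef]
    unfold nablaStar
    congr 1
    apply finsum_eq_finset_sum_of_support_subset
    intro b hb
    simp only [Function.mem_support] at hb
    by_contra hmem
    apply hb
    apply Finset.sum_eq_zero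
    intro μ _
    rw [hχ0 μ b hmem, mul_zero]
  -- compute the RHS divergence
  have hrhs : ∀ μ : Fin m, D μ (-∑ a ∈ T, χ μ a * φ a)
      = -∑ a ∈ T, (D μ (χ μ a) * φ a + χ μ a * D μ (φ a)) := by
    intro μ
    rw [map_neg, map_sum]
    congr 1
    apply Finset.sum_congr rfl
    intro a _
    rw [Derivation.leibniz]
    simp only [smul_eq_mul]
    ring
  simp only [hrhs]
  -- the nabla condition on φ
  have hDφ : ∀ (a : A), a ∈ Sχ → ∀ μ : Fin m,
      D μ (φ a) = -∑ c ∈ T, Γ a μ c * φ c := by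
    intro a ha μ
    have h0 := hnab g hg a μ
    unfold nabla at h0
    have hfin : ∑ᶠ c, Γ a μ c * φ c = ∑ c ∈ T, Γ a μ c * φ c := by
      apply finsum_eq_finset_sum_of_support_subset
      intro c hc
      simp only [Function.mem_support] at hc
      have hcS : c ∈ SΓ a := by
        by_contra hmem
        exact hc (by rw [hΓ0 a μ c hmem, zero_mul])
      exact hΓT a ha hcS
    rw [← hfin]
    linear_combination h0
  -- the crucial cancellation
  have hkey2 : ∑ a ∈ T, (∑ b ∈ Sχ, ∑ μ, Γ b μ a * χ μ b) * φ a
      = -∑ μ, ∑ a ∈ T, χ μ a * D μ (φ a) := by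
    have hR : ∀ μ : Fin m, ∑ a ∈ T, χ μ a * D μ (φ a)
        = ∑ a ∈ Sχ, χ μ a * D μ (φ a) := by
      intro μ
      symm
      apply Finset.sum_subset hχT
      intro a _ ha
      rw [hχ0 μ a ha, zero_mul]
    calc ∑ a ∈ T, (∑ b ∈ Sχ, ∑ μ, Γ b μ a * χ μ b) * φ a
        = ∑ b ∈ Sχ, ∑ a ∈ T, ∑ μ, Γ b μ a * χ μ b * φ a := by
          rw [Finset.sum_comm]
          apply Finset.sum_congr rfl; intro a _
          rw [Finset.sum_mul]
          apply Finset.sum_congr rfl; intro b _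
          rw [Finset.sum_mul]
      _ = ∑ b ∈ Sχ, ∑ μ, χ μ b * ∑ a ∈ T, Γ b μ a * φ a := by
          apply Finset.sum_congr rfl; intro b _
          rw [Finset.sum_comm]
          apply Finset.sum_congr rfl; intro μ _
          rw [Finset.mul_sum]
          apply Finset.sum_congr rfl; intro a _
          ring
      _ = ∑ b ∈ Sχ, ∑ μ, χ μ b * (-D μ (φ b)) := by
          apply Finset.sum_congr rfl; intro b hb
          apply Finset.sum_congr rfl; intro μ _
          rw [hDφ b hb μ]; ring_nf
      _ = -∑ μ, ∑ a ∈ T, χ μ a * D μ (φ a) := by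
          rw [← Finset.sum_neg_distrib, Finset.sum_comm]
          apply Finset.sum_congr rfl; intro μ _
          rw [hR μ, ← Finset.sum_neg_distrib]
          apply Finset.sum_congr rfl; intro b _
          ring
  -- finish
  calc ∑ a ∈ T, h a * φ a
      = ∑ a ∈ T, ((-∑ μ, D μ (χ μ a)) * φ a
         + (∑ b ∈ Sχ, ∑ μ, Γ b μ a * χ μ b) * φ a) := by
        apply Finset.sum_congr rfl; intro a _
        rw [hexp a, add_mul]
    _ = (-∑ μ, ∑ a ∈ T, D μ (χ μ a) * φ a)
         + ∑ a ∈ T, (∑ b ∈ Sχ, ∑ μ, Γ b μ a * χ μ b) * φ a := by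
        rw [Finset.sum_add_distrib]
        congr 1
        have : ∀ a ∈ T, (-∑ μ, D μ (χ μ a)) * φ a
            = ∑ μ, -(D μ (χ μ a) * φ a) := by
          intro a _
          rw [neg_mul, Finset.sum_mul, ← Finset.sum_neg_distrib]
        rw [Finset.sum_congr rfl this, Finset.sum_comm]
        simp only [Finset.sum_neg_distrib]
    _ = (-∑ μ, ∑ a ∈ T, D μ (χ μ a) * φ a)
         + -∑ μ, ∑ a ∈ T, χ μ a * D μ (φ a) := by rw [hkey2]
    _ = ∑ μ, -∑ a ∈ T, (D μ (χ μ a) * φ a + χ μ a * D μ (φ a)) := by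
        simp only [Finset.sum_neg_distrib, Finset.sum_add_distrib]
        rw [neg_add]
end
end

section
/- (The dual of the reduced space is Ē.) Assume F has the du Bois-Reymond property: if φ ∈ F satisfies φ·ψ ∈ Div F^M for all ψ ∈ F, then φ = 0. Then for φ ∈ F^A the following are equivalent: (i) ⟨∇*χ, φ⟩ ∈ Div F^M for every finitely supported χ ∈ F̄^M_A; (ii) ∇φ = 0. -/
noncomputable section

variable {𝔽 : Type*} [Field 𝔽] {F : Type*} [CommRing F] [Algebra 𝔽 F] {m : ℕ}
  {A A' : Type*}

lemma key_identity
    {𝔽 : Type*} [Field 𝔽] {F : Type*} [CommRing F] [Algebra 𝔽 F]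
    {m : ℕ} {A : Type*}
    (D : Fin m → Derivation 𝔽 F F)
    (Γ : A → Fin m → A → F)
    (hΓfin : ∀ b : A, {p : Fin m × A | Γ b p.1 p.2 ≠ 0}.Finite)
    (φ : A → F) (χ : Fin m → A → F)
    (hχ : {p : Fin m × A | χ p.1 p.2 ≠ 0}.Finite) :
    pair (nablaStar D Γ χ) φ + ∑ μ, D μ (∑ᶠ a, χ μ a * φ a)
      = ∑ μ, ∑ᶠ a, χ μ a * nabla D Γ φ a μ := by
  classical
  set S1 : Finset A := (hχ.image Prod.snd).toFinset with hS1def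
  set T : Finset A := S1 ∪ S1.biUnion (fun b => ((hΓfin b).image Prod.snd).toFinset) with hTdef
  have hmemS1 : ∀ {μ a}, χ μ a ≠ 0 → a ∈ S1 := by
    intro μ a h
    simp only [hS1def, Set.Finite.mem_toFinset, Set.mem_image]
    exact ⟨(μ, a), h, rfl⟩
  have hmemT1 : ∀ {μ a}, χ μ a ≠ 0 → a ∈ T := fun h => Finset.mem_union_left _ (hmemS1 h)
  have hmemT2 : ∀ {b μ a}, b ∈ S1 → Γ b μ a ≠ 0 → a ∈ T := by
    intro b μ a hb h
    refine Finset.mem_union_right _ (Finset.mem_biUnion.2 ⟨b, hb, ?_⟩)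
    simp only [Set.Finite.mem_toFinset, Set.mem_image]
    exact ⟨(μ, a), h, rfl⟩
  have h1 : pair (nablaStar D Γ χ) φ = ∑ a ∈ T, nablaStar D Γ χ a * φ a := by
    refine finsum_eq_sum_of_support_subset _ fun a ha => ?_
    simp only [Function.mem_support] at ha
    by_contra haT
    apply ha
    have hz : nablaStar D Γ χ a = 0 := by
      have hχ0 : ∀ μ, χ μ a = 0 := fun μ => by
        by_contra h; exact haT (hmemT1 h)
      unfold nablaStar
      rw [finsum_eq_zero_of_forall_eq_zero]
      · simp [hχ0]
      · intro b
        refine Finset.sum_eq_zero fun μ _ => ?_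
        by_cases hb : χ μ b = 0
        · rw [hb, mul_zero]
        · have : Γ b μ a = 0 := by
            by_contra hg; exact haT (hmemT2 (hmemS1 hb) hg)
          rw [this, zero_mul]
    rw [hz, zero_mul]
  have h2 : ∀ a, nablaStar D Γ χ a
      = -∑ μ, D μ (χ μ a) + ∑ b ∈ T, ∑ μ, Γ b μ a * χ μ b := by
    intro a
    unfold nablaStar
    congr 1
    refine finsum_eq_sum_of_support_subset _ fun b hb => ?_
    simp only [Function.mem_support] at hb
    by_contra hbT
    apply hb
    refine Finset.sum_eq_zero fun μ _ => ?_
    by_cases h : χ μ b = 0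
    · rw [h, mul_zero]
    · exact absurd (hmemT1 h) hbT
  have h3 : ∀ μ, (∑ᶠ a, χ μ a * φ a) = ∑ a ∈ T, χ μ a * φ a := by
    intro μ
    refine finsum_eq_sum_of_support_subset _ fun a ha => ?_
    simp only [Function.mem_support] at ha
    by_contra haT
    exact ha (by rw [show χ μ a = 0 from by by_contra h; exact haT (hmemT1 h), zero_mul])
  have h4 : ∀ μ, (∑ᶠ a, χ μ a * nabla D Γ φ a μ)
      = ∑ a ∈ T, χ μ a * nabla D Γ φ a μ := by
    intro μ
    refine finsum_eq_sum_of_support_subset _ fun a ha => ?_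
    simp only [Function.mem_support] at ha
    by_contra haT
    exact ha (by rw [show χ μ a = 0 from by by_contra h; exact haT (hmemT1 h), zero_mul])
  have h5 : ∀ μ a, χ μ a * nabla D Γ φ a μ
      = χ μ a * (D μ (φ a) + ∑ b ∈ T, Γ a μ b * φ b) := by
    intro μ a
    by_cases h : χ μ a = 0
    · rw [h, zero_mul, zero_mul]
    · congr 1
      unfold nabla
      congr 1
      refine finsum_eq_sum_of_support_subset _ fun b hb => ?_
      simp only [Function.mem_support] at hb
      by_contra hbT
      apply hb
      rw [show Γ a μ b = 0 from by by_contra hg; exact hbT (hmemT2 (hmemS1 h) hg), zero_mul]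
  have e1 : ∀ μ, D μ (∑ a ∈ T, χ μ a * φ a)
      = ∑ a ∈ T, (χ μ a * D μ (φ a) + φ a * D μ (χ μ a)) := by
    intro μ
    rw [map_sum]
    exact Finset.sum_congr rfl fun a _ => by rw [Derivation.leibniz]; simp [smul_eq_mul]
  rw [h1]
  simp only [h3, e1]
  conv_rhs => rw [Finset.sum_congr rfl fun μ _ => h4 μ]
  simp only [h5, h2]
  simp only [add_mul, neg_mul, mul_add, Finset.sum_add_distrib, Finset.sum_mul,
    Finset.mul_sum]
  have hW : (∑ x ∈ T, -∑ i : Fin m, D i (χ i x) * φ x)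
      = -∑ i : Fin m, ∑ x ∈ T, φ x * D i (χ i x) := by
    simp only [← Finset.sum_neg_distrib]
    rw [Finset.sum_comm]
    exact Finset.sum_congr rfl fun i _ => Finset.sum_congr rfl fun x _ => by ring
  have hZ : (∑ x ∈ T, ∑ y ∈ T, ∑ i : Fin m, Γ y i x * χ i y * φ x)
      = ∑ i : Fin m, ∑ x ∈ T, ∑ y ∈ T, χ i x * (Γ x i y * φ y) := by
    calc (∑ x ∈ T, ∑ y ∈ T, ∑ i : Fin m, Γ y i x * χ i y * φ x)
        = ∑ y ∈ T, ∑ x ∈ T, ∑ i : Fin m, Γ y i x * χ i y * φ x := Finset.sum_comm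
      _ = ∑ y ∈ T, ∑ i : Fin m, ∑ x ∈ T, Γ y i x * χ i y * φ x :=
          Finset.sum_congr rfl fun y _ => Finset.sum_comm
      _ = ∑ i : Fin m, ∑ y ∈ T, ∑ x ∈ T, Γ y i x * χ i y * φ x := Finset.sum_comm
      _ = ∑ i : Fin m, ∑ x ∈ T, ∑ y ∈ T, χ i x * (Γ x i y * φ y) :=
          Finset.sum_congr rfl fun i _ => Finset.sum_congr rfl fun x _ =>
            Finset.sum_congr rfl fun y _ => by ring
  rw [hW, hZ]
  ring

/-- the dual of the reduced space is `Ē`: assuming the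
du Bois-Reymond property, `⟨∇*χ, φ⟩ ∈ Div F^M` for all finitely supported `χ`
iff `∇φ = 0`. -/
theorem stmt_9
    {𝔽 : Type*} [Field 𝔽] [CharZero 𝔽] {F : Type*} [CommRing F] [Algebra 𝔽 F]
    {m : ℕ} {A : Type*}
    (D : Fin m → Derivation 𝔽 F F)
    (hDcomm : ∀ μ ν (f : F), D μ (D ν f) = D ν (D μ f))
    (Γ : A → Fin m → A → F)
    (hΓfin : ∀ b : A, {p : Fin m × A | Γ b p.1 p.2 ≠ 0}.Finite)
    (hdBR : ∀ φ : F, (∀ ψ : F, IsDiv D (φ * ψ)) → φ = 0)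
    (φ : A → F) :
    (∀ χ : Fin m → A → F, {p : Fin m × A | χ p.1 p.2 ≠ 0}.Finite →
        IsDiv D (pair (nablaStar D Γ χ) φ))
    ↔ (∀ (a : A) (μ : Fin m), nabla D Γ φ a μ = 0) := by
  classical
  constructor
  · intro hdiv a₀ μ₀
    apply hdBR
    intro ψ
    rw [mul_comm]
    set χ : Fin m → A → F := fun μ a => if (μ, a) = (μ₀, a₀) then ψ else 0 with hχdef
    have hχfin : {p : Fin m × A | χ p.1 p.2 ≠ 0}.Finite := by
      apply Set.Finite.subset (Set.finite_singleton (μ₀, a₀))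
      intro p hp
      simp only [hχdef, Set.mem_setOf_eq, ne_eq, ite_eq_right_iff, not_forall] at hp
      simpa using hp.1
    have hsingle : ∀ (g : A → F) μ, (∑ᶠ a, χ μ a * g a)
        = if μ = μ₀ then ψ * g a₀ else 0 := by
      intro g μ
      rw [finsum_eq_single _ a₀ (fun x hx => by
        simp only [hχdef, Prod.mk.injEq]
        rw [if_neg (by simp [hx]), zero_mul])]
      by_cases h : μ = μ₀ <;> simp [hχdef, h]
    have hkey := key_identity D Γ hΓfin φ χ hχfin
    have hR : (∑ μ, ∑ᶠ a, χ μ a * nabla D Γ φ a μ) = ψ * nabla D Γ φ a₀ μ₀ := by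
      have := fun μ => hsingle (fun a => nabla D Γ φ a μ) μ
      simp only [this]
      simp
    have hL : (∑ μ, D μ (∑ᶠ a, χ μ a * φ a)) = D μ₀ (ψ * φ a₀) := by
      simp only [hsingle φ]
      simp [apply_ite (D _), Finset.sum_ite_eq']
    rw [hR, hL] at hkey
    obtain ⟨ψ1, e1⟩ := hdiv χ hχfin
    refine ⟨fun μ => ψ1 μ + if μ = μ₀ then ψ * φ a₀ else 0, ?_⟩
    rw [← hkey, e1]
    simp [Finset.sum_add_distrib, apply_ite (D _), Finset.sum_ite_eq']
  · intro h0 χ hχfin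
    have hkey := key_identity D Γ hΓfin φ χ hχfin
    simp only [h0, mul_zero, finsum_zero, Finset.sum_const_zero] at hkey
    refine ⟨fun μ => -(∑ᶠ a, χ μ a * φ a), ?_⟩
    simp only [map_neg]
    rw [Finset.sum_neg_distrib]
    exact eq_neg_of_add_eq_zero_left hkey
end
end
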